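/- arXiv:2504.02189 — 4 statements merged into one kernel-verified Lean document; each statement's English description precedes it below -/
import Mathlib

section
/- For the two-particle Calogero–Moser system, let G₁ = q₁ + q₂ and G₂ = (q₁−q₂)(p₁−p₂). Then {G₁,G₂} = 0, {F₁,G₁} = −2, {F₂,G₁} = −2F₁, {F₁,G₂} = 0, and {F₂,G₂} = 2F₁² − 4F₂, where F₁ = p₁+p₂ and F₂ = p₁²+p₂²+2g²/(q₁−q₂)². -/
abbrev Phase2 := (Fin 2 → ℝ) × (Fin 2 → ℝ)

/-- Poisson bracket on `ℝ⁴` with coordinates `(q₁,q₂,p₁,p₂)`. -/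
noncomputable def poisson (F G : Phase2 → ℝ) (x : Phase2) : ℝ :=
  ∑ i : Fin 2,
    (fderiv ℝ F x (Pi.single i 1, 0) * fderiv ℝ G x (0, Pi.single i 1)
      - fderiv ℝ G x (Pi.single i 1, 0) * fderiv ℝ F x (0, Pi.single i 1))

/-! Writing the differentials as `∑ aᵢ dqᵢ + bᵢ dpᵢ` and `∑ cᵢ dqᵢ + dᵢ dpᵢ`, the bracket is
`∑ (aᵢ dᵢ - cᵢ bᵢ)`, so all five identities become algebraic identities between explicit
gradients. In `{F₂, G₂}` the potential `2g²/r²`, `r = q₁ - q₂`, is homogeneous of degree `-2`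
in `r`, so `r ∂ᵣ` turns it into `-8g²/r²`, which is what makes `2F₁² - 4F₂` appear. -/

namespace Phase2

noncomputable def q (i : Fin 2) : Phase2 →L[ℝ] ℝ :=
  (ContinuousLinearMap.proj i).comp (ContinuousLinearMap.fst ℝ _ _)

noncomputable def p (i : Fin 2) : Phase2 →L[ℝ] ℝ :=
  (ContinuousLinearMap.proj i).comp (ContinuousLinearMap.snd ℝ _ _)

@[simp] lemma q_apply (i : Fin 2) (v : Phase2) : q i v = v.1 i := rfl

@[simp] lemma p_apply (i : Fin 2) (v : Phase2) : p i v = v.2 i := rfl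

lemma hasFDerivAt_q (i : Fin 2) (x : Phase2) : HasFDerivAt (fun y : Phase2 => y.1 i) (q i) x :=
  (q i).hasFDerivAt

lemma hasFDerivAt_p (i : Fin 2) (x : Phase2) : HasFDerivAt (fun y : Phase2 => y.2 i) (p i) x :=
  (p i).hasFDerivAt

noncomputable def gradForm (a b : Fin 2 → ℝ) : Phase2 →L[ℝ] ℝ :=
  ∑ i, (a i • q i + b i • p i)

@[simp] lemma gradForm_apply (a b : Fin 2 → ℝ) (v : Phase2) :
    gradForm a b v = ∑ i, (a i * v.1 i + b i * v.2 i) := by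
  simp [gradForm]

lemma poisson_eq_of_hasFDerivAt {F G : Phase2 → ℝ} {a b c d : Fin 2 → ℝ} {x : Phase2}
    (hF : HasFDerivAt F (gradForm a b) x) (hG : HasFDerivAt G (gradForm c d) x) :
    poisson F G x = ∑ i, (a i * d i - c i * b i) := by
  simp [poisson, hF.fderiv, hG.fderiv, Pi.single_apply]

lemma hasFDerivAt_q_add (x : Phase2) :
    HasFDerivAt (fun y : Phase2 => y.1 0 + y.1 1) (gradForm ![1, 1] 0) x :=
  ((hasFDerivAt_q 0 x).add (hasFDerivAt_q 1 x)).congr_fderiv <| by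
    ext v <;> simp [Fin.sum_univ_two]

lemma hasFDerivAt_p_add (x : Phase2) :
    HasFDerivAt (fun y : Phase2 => y.2 0 + y.2 1) (gradForm 0 ![1, 1]) x :=
  ((hasFDerivAt_p 0 x).add (hasFDerivAt_p 1 x)).congr_fderiv <| by
    ext v <;> simp [Fin.sum_univ_two]

lemma hasFDerivAt_q_sub_mul_p_sub (x : Phase2) :
    HasFDerivAt (fun y : Phase2 => (y.1 0 - y.1 1) * (y.2 0 - y.2 1))
      (gradForm ![x.2 0 - x.2 1, x.2 1 - x.2 0] ![x.1 0 - x.1 1, x.1 1 - x.1 0]) x :=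
  (((hasFDerivAt_q 0 x).sub (hasFDerivAt_q 1 x)).mul
    ((hasFDerivAt_p 0 x).sub (hasFDerivAt_p 1 x))).congr_fderiv <| by
    ext v <;> simp [Fin.sum_univ_two] <;> ring

lemma hasFDerivAt_calogeroMoser_energy (g : ℝ) {x : Phase2} (hx : x.1 0 ≠ x.1 1) :
    HasFDerivAt (fun y : Phase2 => (y.2 0) ^ 2 + (y.2 1) ^ 2 + 2 * g ^ 2 / (y.1 0 - y.1 1) ^ 2)
      (gradForm ![-4 * g ^ 2 / (x.1 0 - x.1 1) ^ 3, 4 * g ^ 2 / (x.1 0 - x.1 1) ^ 3]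
        ![2 * x.2 0, 2 * x.2 1]) x := by
  have hr : (x.1 0 - x.1 1) ^ 2 ≠ 0 := pow_ne_zero _ (sub_ne_zero.mpr hx)
  have hV := ((hasDerivAt_const (x.1 0 - x.1 1) (2 * g ^ 2)).div
    (hasDerivAt_pow 2 (x.1 0 - x.1 1)) hr).comp_hasFDerivAt x
    ((hasFDerivAt_q 0 x).sub (hasFDerivAt_q 1 x))
  refine (((hasFDerivAt_p 0 x).pow 2).add ((hasFDerivAt_p 1 x).pow 2) |>.add hV).congr_fderiv ?_
  ext v <;> simp [Fin.sum_univ_two]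
  field_simp
  ring

end Phase2

open Phase2

/-- Poisson brackets of `G₁ = q₁+q₂`, `G₂ = (q₁−q₂)(p₁−p₂)` with the
Calogero–Moser integrals `F₁, F₂` on the region `q₁ ≠ q₂`. -/
theorem stmt_10 (g : ℝ) (F₁ F₂ G₁ G₂ : Phase2 → ℝ)
    (hF₁def : F₁ = fun x => x.2 0 + x.2 1)
    (hF₂def : F₂ = fun x => (x.2 0) ^ 2 + (x.2 1) ^ 2
      + 2 * g ^ 2 / (x.1 0 - x.1 1) ^ 2)
    (hG₁def : G₁ = fun x => x.1 0 + x.1 1)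
    (hG₂def : G₂ = fun x => (x.1 0 - x.1 1) * (x.2 0 - x.2 1)) :
    ∀ x : Phase2, x.1 0 ≠ x.1 1 →
      poisson G₁ G₂ x = 0 ∧
      poisson F₁ G₁ x = -2 ∧
      poisson F₂ G₁ x = -2 * F₁ x ∧
      poisson F₁ G₂ x = 0 ∧
      poisson F₂ G₂ x = 2 * (F₁ x) ^ 2 - 4 * F₂ x := by
  intro x hx
  subst hF₁def hF₂def hG₁def hG₂def
  have hF₁ := hasFDerivAt_p_add x
  have hF₂ := hasFDerivAt_calogeroMoser_energy g hx
  have hG₁ := hasFDerivAt_q_add x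
  have hG₂ := hasFDerivAt_q_sub_mul_p_sub x
  rw [poisson_eq_of_hasFDerivAt hG₁ hG₂, poisson_eq_of_hasFDerivAt hF₁ hG₁,
    poisson_eq_of_hasFDerivAt hF₂ hG₁, poisson_eq_of_hasFDerivAt hF₁ hG₂,
    poisson_eq_of_hasFDerivAt hF₂ hG₂]
  simp only [Fin.sum_univ_two]
  refine ⟨?_, ?_, ?_, ?_, ?_⟩ <;> simp <;> field_simp <;> ring
end

section
/- The Jacobian determinant of the map (q₁,q₂,p₁,p₂) ↦ (F₁,F₂,G₁,G₂), where F₁ = p₁+p₂, F₂ = p₁²+p₂²+2g²/(q₁−q₂)², G₁ = q₁+q₂, G₂ = (q₁−q₂)(p₁−p₂), equals 4(p₁−p₂)² + 16g²/(q₁−q₂)², which is nonzero whenever q₁ ≠ q₂ and g ≠ 0. -/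
/-- Coordinate directions `(∂/∂q₁, ∂/∂q₂, ∂/∂p₁, ∂/∂p₂)` of `ℝ⁴`. -/
noncomputable def coordDir : Fin 4 → Phase2 :=
  ![(Pi.single 0 1, 0), (Pi.single 1 1, 0), (0, Pi.single 0 1), (0, Pi.single 1 1)]

open ContinuousLinearMap

theorem hasDerivAt_const_div_sq (c : ℝ) {t : ℝ} (ht : t ≠ 0) :
    HasDerivAt (fun s => c / s ^ 2) (-(2 * c) / t ^ 3) t := by
  refine ((hasDerivAt_const t c).fun_div (hasDerivAt_pow 2 t) (pow_ne_zero 2 ht)).congr_deriv ?_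
  field_simp
  ring

theorem det_fin_four_jacobian (k u v w d : ℝ) :
    (!![0, 0, 1, 1; -k, k, u, v; 1, 1, 0, 0; w, -w, d, -d] : Matrix (Fin 4) (Fin 4) ℝ).det =
      2 * w * (u - v) + 4 * k * d := by
  simp [Matrix.det_succ_row_zero, Fin.sum_univ_succ, Fin.succAbove]
  ring

namespace Phase2

variable {x : Phase2}

theorem hasFDerivAt_fst_apply (i : Fin 2) :
    HasFDerivAt (fun y : Phase2 => y.1 i) ((proj i).comp (fst ℝ (Fin 2 → ℝ) (Fin 2 → ℝ))) x :=
  ((proj i).comp (fst ℝ (Fin 2 → ℝ) (Fin 2 → ℝ))).hasFDerivAt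

theorem hasFDerivAt_snd_apply (i : Fin 2) :
    HasFDerivAt (fun y : Phase2 => y.2 i) ((proj i).comp (snd ℝ (Fin 2 → ℝ) (Fin 2 → ℝ))) x :=
  ((proj i).comp (snd ℝ (Fin 2 → ℝ) (Fin 2 → ℝ))).hasFDerivAt

theorem fderiv_coordDir_eq {f : Phase2 → ℝ} {L : Phase2 →L[ℝ] ℝ} (h : HasFDerivAt f L x) :
    (fun j => fderiv ℝ f x (coordDir j)) =
      ![L (Pi.single 0 1, 0), L (Pi.single 1 1, 0),
        L (0, Pi.single 0 1), L (0, Pi.single 1 1)] := by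
  ext j
  fin_cases j <;> simp [h.fderiv, coordDir]

theorem fderiv_add_snd_coordDir :
    (fun j => fderiv ℝ (fun y : Phase2 => y.2 0 + y.2 1) x (coordDir j)) = ![0, 0, 1, 1] := by
  refine (fderiv_coordDir_eq ((hasFDerivAt_snd_apply 0).add (hasFDerivAt_snd_apply 1))).trans ?_
  simp

theorem fderiv_energy_coordDir (g : ℝ) (hx : x.1 0 ≠ x.1 1) :
    (fun j => fderiv ℝ (fun y : Phase2 => y.2 0 ^ 2 + y.2 1 ^ 2 + 2 * g ^ 2 / (y.1 0 - y.1 1) ^ 2)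
      x (coordDir j)) =
      ![-(4 * g ^ 2 / (x.1 0 - x.1 1) ^ 3), 4 * g ^ 2 / (x.1 0 - x.1 1) ^ 3,
        2 * x.2 0, 2 * x.2 1] := by
  have hpot := (hasDerivAt_const_div_sq (2 * g ^ 2) (sub_ne_zero.mpr hx)).comp_hasFDerivAt x
    ((hasFDerivAt_fst_apply 0).sub (hasFDerivAt_fst_apply 1))
  refine (fderiv_coordDir_eq ((((hasFDerivAt_snd_apply 0).pow 2).add
    ((hasFDerivAt_snd_apply 1).pow 2)).add hpot)).trans ?_
  norm_num [neg_div, ← mul_assoc]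

theorem fderiv_add_fst_coordDir :
    (fun j => fderiv ℝ (fun y : Phase2 => y.1 0 + y.1 1) x (coordDir j)) = ![1, 1, 0, 0] := by
  refine (fderiv_coordDir_eq ((hasFDerivAt_fst_apply 0).add (hasFDerivAt_fst_apply 1))).trans ?_
  simp

theorem fderiv_sub_fst_mul_sub_snd_coordDir :
    (fun j => fderiv ℝ (fun y : Phase2 => (y.1 0 - y.1 1) * (y.2 0 - y.2 1)) x (coordDir j)) =
      ![x.2 0 - x.2 1, -(x.2 0 - x.2 1), x.1 0 - x.1 1, -(x.1 0 - x.1 1)] := by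
  refine (fderiv_coordDir_eq (((hasFDerivAt_fst_apply 0).sub (hasFDerivAt_fst_apply 1)).mul
    ((hasFDerivAt_snd_apply 0).sub (hasFDerivAt_snd_apply 1)))).trans ?_
  simp

end Phase2

/-- The Jacobian determinant of `(q₁,q₂,p₁,p₂) ↦ (F₁,F₂,G₁,G₂)` equals
`4(p₁−p₂)² + 16g²/(q₁−q₂)²`, nonzero when `q₁ ≠ q₂` and `g ≠ 0`. -/
theorem stmt_11 (g : ℝ) (F₁ F₂ G₁ G₂ : Phase2 → ℝ)
    (hF₁def : F₁ = fun x => x.2 0 + x.2 1)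
    (hF₂def : F₂ = fun x => (x.2 0) ^ 2 + (x.2 1) ^ 2
      + 2 * g ^ 2 / (x.1 0 - x.1 1) ^ 2)
    (hG₁def : G₁ = fun x => x.1 0 + x.1 1)
    (hG₂def : G₂ = fun x => (x.1 0 - x.1 1) * (x.2 0 - x.2 1))
    (J : Phase2 → Matrix (Fin 4) (Fin 4) ℝ)
    (hJdef : J = fun x => Matrix.of fun i j =>
      fderiv ℝ (![F₁, F₂, G₁, G₂] i) x (coordDir j)) :
    ∀ x : Phase2, x.1 0 ≠ x.1 1 →
      (J x).det = 4 * (x.2 0 - x.2 1) ^ 2 + 16 * g ^ 2 / (x.1 0 - x.1 1) ^ 2 ∧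
      (g ≠ 0 → (J x).det ≠ 0) := by
  intro x hx
  have hd : x.1 0 - x.1 1 ≠ 0 := sub_ne_zero.mpr hx
  have hJx : J x = !![0, 0, 1, 1;
      -(4 * g ^ 2 / (x.1 0 - x.1 1) ^ 3), 4 * g ^ 2 / (x.1 0 - x.1 1) ^ 3, 2 * x.2 0, 2 * x.2 1;
      1, 1, 0, 0;
      x.2 0 - x.2 1, -(x.2 0 - x.2 1), x.1 0 - x.1 1, -(x.1 0 - x.1 1)] := by
    subst hF₁def hF₂def hG₁def hG₂def hJdef
    ext i j
    fin_cases i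
    exacts [congrFun Phase2.fderiv_add_snd_coordDir j,
      congrFun (Phase2.fderiv_energy_coordDir g hx) j,
      congrFun Phase2.fderiv_add_fst_coordDir j,
      congrFun Phase2.fderiv_sub_fst_mul_sub_snd_coordDir j]
  have hdet : (J x).det = 4 * (x.2 0 - x.2 1) ^ 2 + 16 * g ^ 2 / (x.1 0 - x.1 1) ^ 2 := by
    rw [hJx, det_fin_four_jacobian]
    field_simp
    ring
  refine ⟨hdet, fun hg => ?_⟩
  rw [hdet]
  positivity
end

section
/- The curves q₁(t) = C₃t − C₁ + (1/2)√(e^{−4C₄}(t+2C₂)² + 4g²e^{4C₄}), q₂(t) = C₃t − C₁ − (1/2)√(e^{−4C₄}(t+2C₂)² + 4g²e^{4C₄}), p₁(t) = C₃ + (1/2) e^{−4C₄}(t+2C₂)/√(e^{−4C₄}(t+2C₂)² + 4g²e^{4C₄}), p₂(t) = C₃ − (1/2) e^{−4C₄}(t+2C₂)/√(e^{−4C₄}(t+2C₂)² + 4g²e^{4C₄}), with g ≠ 0, solve Hamilton's equations q̇_i = p_i, ṗ₁ = 2g²/(q₁−q₂)³, ṗ₂ = −2g²/(q₁−q₂)³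 for the Hamiltonian H = (1/2)(p₁²+p₂²) + g²/(q₁−q₂)². -/
/-!
The relative coordinate `q₁ - q₂` is `R t = √(a (t + c)² + b)` with `a = e^{-4C₄}`, `b = 4 g² e^{4C₄}`,
so `ab = 4g²`. Differentiating, `R' = a (t + c) / R` and `(a (t + c) / R)' = a b / R³ = 4 g² / R³`;
the momenta are the centre-of-mass velocity `C₃` plus or minus half of `R'`.
-/

open Real

section SqrtQuadratic

variable {a b c : ℝ}

lemma hasDerivAt_sqrt_sq_add (ha : 0 ≤ a) (hb : 0 < b) (t : ℝ) :
    HasDerivAt (fun s => √(a * (s + c) ^ 2 + b)) (a * (t + c) / √(a * (t + c) ^ 2 + b)) t := by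
  have hu : HasDerivAt (fun s => a * (s + c) ^ 2 + b) (2 * (a * (t + c))) t := by
    refine (((((hasDerivAt_id t).add_const c).pow 2).const_mul a).add_const b).congr_deriv ?_
    simp only [id, Nat.cast_ofNat]
    ring
  refine (hu.sqrt (by positivity)).congr_deriv ?_
  field_simp

lemma hasDerivAt_div_sqrt_sq_add (ha : 0 ≤ a) (hb : 0 < b) (t : ℝ) :
    HasDerivAt (fun s => a * (s + c) / √(a * (s + c) ^ 2 + b))
      (a * b / √(a * (t + c) ^ 2 + b) ^ 3) t := by
  have hR : 0 < √(a * (t + c) ^ 2 + b) := sqrt_pos.2 (by positivity)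
  have hRsq : √(a * (t + c) ^ 2 + b) ^ 2 = a * (t + c) ^ 2 + b := sq_sqrt (by positivity)
  have hnum : HasDerivAt (fun s => a * (s + c)) a t := by
    simpa using ((hasDerivAt_id t).add_const c).const_mul a
  refine (hnum.div (hasDerivAt_sqrt_sq_add ha hb t) hR.ne').congr_deriv ?_
  field_simp
  linear_combination a * hRsq

end SqrtQuadratic

/-- The explicit curves solve Hamilton's equations of the two-particle
rational Calogero–Moser system. -/
theorem stmt_12 (g C₁ C₂ C₃ C₄ : ℝ) (hg : g ≠ 0)
    (R q₁ q₂ p₁ p₂ : ℝ → ℝ)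
    (hRdef : R = fun t =>
      Real.sqrt (exp (-4 * C₄) * (t + 2 * C₂) ^ 2 + 4 * g ^ 2 * exp (4 * C₄)))
    (hq₁ : q₁ = fun t => C₃ * t - C₁ + 1 / 2 * R t)
    (hq₂ : q₂ = fun t => C₃ * t - C₁ - 1 / 2 * R t)
    (hp₁ : p₁ = fun t => C₃ + 1 / 2 * (exp (-4 * C₄) * (t + 2 * C₂)) / R t)
    (hp₂ : p₂ = fun t => C₃ - 1 / 2 * (exp (-4 * C₄) * (t + 2 * C₂)) / R t) :
    ∀ t : ℝ,
      HasDerivAt q₁ (p₁ t) t ∧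
      HasDerivAt q₂ (p₂ t) t ∧
      HasDerivAt p₁ (2 * g ^ 2 / (q₁ t - q₂ t) ^ 3) t ∧
      HasDerivAt p₂ (-(2 * g ^ 2 / (q₁ t - q₂ t) ^ 3)) t := by
  intro t
  set E := exp (-4 * C₄)
  set B := 4 * g ^ 2 * exp (4 * C₄)
  have hB : 0 < B := by positivity
  have hEB : E * B = 4 * g ^ 2 := by
    rw [mul_left_comm, ← exp_add]
    norm_num
  have hR : HasDerivAt R (E * (t + 2 * C₂) / R t) t :=
    hRdef ▸ hasDerivAt_sqrt_sq_add (exp_pos _).le hB t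
  have hP : HasDerivAt (fun s => E * (s + 2 * C₂) / R s) (4 * g ^ 2 / R t ^ 3) t :=
    hEB ▸ hRdef ▸ hasDerivAt_div_sqrt_sq_add (exp_pos _).le hB t
  have hC : HasDerivAt (fun s => C₃ * s - C₁) C₃ t := by
    simpa using ((hasDerivAt_id t).const_mul C₃).sub_const C₁
  have hdiff : q₁ t - q₂ t = R t := by
    rw [hq₁, hq₂]
    ring
  rw [hdiff, hq₁, hq₂, hp₁, hp₂]
  simp only [mul_div_assoc (1 / 2 : ℝ)]
  refine ⟨?_, ?_, ?_, ?_⟩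
  · exact hC.add (hR.const_mul (1 / 2))
  · exact hC.sub (hR.const_mul (1 / 2))
  · refine ((hP.const_mul (1 / 2)).const_add C₃).congr_deriv ?_
    ring
  · refine ((hP.const_mul (1 / 2)).const_sub C₃).congr_deriv ?_
    ring
end

section
/- Along the explicit Calogero–Moser solution curves, the quantities p₁+p₂, p₁²+p₂²+2g²/(q₁−q₂)², and q₁+q₂ − (p₁+p₂)t are constant in t, and (q₁−q₂)(p₁−p₂) = e^{−4C₄}(t+2C₂) is affine in t. -/
/-!
In centre-of-mass and relative coordinates the curves read `p₁ + p₂ = 2C₃`,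
`q₁ + q₂ = 2(C₃t − C₁)`, `q₁ − q₂ = R` and `p₁ − p₂ = κ(t + 2C₂)/R` with `κ = e^{−4C₄}`.
The first three invariants and the affine law are then immediate, and the energy is
`2C₃² + ((κ(t + 2C₂))² + 4g²)/(2R²) = 2C₃² + κ/2`, because `κR² = (κ(t + 2C₂))² + 4g²`.
-/

open Real

lemma two_mul_sq_add_sq_eq_of_add_of_sub {R : Type*} [CommRing R] {x y a b : R}
    (hadd : x + y = a) (hsub : x - y = b) :
    2 * (x ^ 2 + y ^ 2) = a ^ 2 + b ^ 2 := by
  subst hadd hsub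
  ring

lemma sq_div_add_sq_div_eq {K : Type*} [Field K] {κ μ g s r : K} (hκμ : κ * μ = 1)
    (hr : r ^ 2 = κ * s ^ 2 + 4 * g ^ 2 * μ) (hr0 : r ≠ 0) :
    (κ * s / r) ^ 2 + 4 * g ^ 2 / r ^ 2 = κ := by
  field_simp
  linear_combination (-κ) * hr - 4 * g ^ 2 * hκμ

/-- Along the explicit Calogero–Moser solution curves, `p₁+p₂`,
`p₁²+p₂²+2g²/(q₁−q₂)²` and `q₁+q₂ − (p₁+p₂)t` are constant in `t`,
and `(q₁−q₂)(p₁−p₂) = e^{−4C₄}(t+2C₂)` is affine in `t`. -/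
theorem stmt_13 (g C₁ C₂ C₃ C₄ : ℝ) (hg : g ≠ 0)
    (R q₁ q₂ p₁ p₂ : ℝ → ℝ)
    (hRdef : R = fun t =>
      Real.sqrt (exp (-4 * C₄) * (t + 2 * C₂) ^ 2 + 4 * g ^ 2 * exp (4 * C₄)))
    (hq₁ : q₁ = fun t => C₃ * t - C₁ + 1 / 2 * R t)
    (hq₂ : q₂ = fun t => C₃ * t - C₁ - 1 / 2 * R t)
    (hp₁ : p₁ = fun t => C₃ + 1 / 2 * (exp (-4 * C₄) * (t + 2 * C₂)) / R t)
    (hp₂ : p₂ = fun t => C₃ - 1 / 2 * (exp (-4 * C₄) * (t + 2 * C₂)) / R t) :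
    ∀ t : ℝ,
      p₁ t + p₂ t = p₁ 0 + p₂ 0 ∧
      (p₁ t) ^ 2 + (p₂ t) ^ 2 + 2 * g ^ 2 / (q₁ t - q₂ t) ^ 2
        = (p₁ 0) ^ 2 + (p₂ 0) ^ 2 + 2 * g ^ 2 / (q₁ 0 - q₂ 0) ^ 2 ∧
      q₁ t + q₂ t - (p₁ t + p₂ t) * t = q₁ 0 + q₂ 0 ∧
      (q₁ t - q₂ t) * (p₁ t - p₂ t) = exp (-4 * C₄) * (t + 2 * C₂) := by
  set κ := exp (-4 * C₄)
  have hκμ : κ * exp (4 * C₄) = 1 := by rw [← exp_add]; norm_num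
  have hR_sq (s : ℝ) : R s ^ 2 = κ * (s + 2 * C₂) ^ 2 + 4 * g ^ 2 * exp (4 * C₄) := by
    rw [hRdef]; exact sq_sqrt (by positivity)
  have hR_ne (s : ℝ) : R s ≠ 0 := by
    rw [hRdef]; exact (sqrt_pos.2 (by positivity)).ne'
  have hp_add (s : ℝ) : p₁ s + p₂ s = 2 * C₃ := by simp only [hp₁, hp₂]; ring
  have hp_sub (s : ℝ) : p₁ s - p₂ s = κ * (s + 2 * C₂) / R s := by simp only [hp₁, hp₂]; ring
  have hq_add (s : ℝ) : q₁ s + q₂ s = 2 * (C₃ * s - C₁) := by simp only [hq₁, hq₂]; ring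
  have hq_sub (s : ℝ) : q₁ s - q₂ s = R s := by simp only [hq₁, hq₂]; ring
  have energy (s : ℝ) :
      p₁ s ^ 2 + p₂ s ^ 2 + 2 * g ^ 2 / (q₁ s - q₂ s) ^ 2 = 2 * C₃ ^ 2 + κ / 2 := by
    rw [hq_sub]
    linear_combination (two_mul_sq_add_sq_eq_of_add_of_sub (hp_add s) (hp_sub s)
      + sq_div_add_sq_div_eq hκμ (hR_sq s) (hR_ne s)) / 2
  intro t
  refine ⟨by rw [hp_add, hp_add], by rw [energy, energy], ?_, ?_⟩
  · rw [hq_add, hq_add, hp_add]; ring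
  · rw [hq_sub, hp_sub]; field_simp [hR_ne t]
end
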